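/- arXiv:1102.2250 — 2 statements merged into one kernel-verified Lean document; each statement's English description precedes it below -/
import Mathlib

section
/- Let K_n, p_n, c_n be as in the scaling condition p_n(2K_n − K_n²/(n−1)) = c_n log n with c_n → c > 0, and suppose p_n → p* ∈ [0,1]. Define α_n = (1−c_n) log n + K_n(p_n + log(1−p_n)). If c > τ(p*) then α_n → −∞, and if c < τ(p*) then α_n → +∞, where τ is the threshold function τ(0)=1, τ(p)=2/(1−log(1−p)/p) for 0<p<1, τ(1)=0. -/
noncomputable def tau (p : ℝ) : ℝ :=
  if p = 0 then 1 else if p = 1 then 0 else 2 / (1 - Real.log (1 - p) / p)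

/-!
On `(0, 1)` one has `1 / τ(p) = (1 - log (1 - p) / p) / 2`, and the scaling relation turns `α_n`
into the exact decomposition
`α_n = log n * (1 - c_n / τ(p_n)) + K_n² / (n - 1) * (p_n + log (1 - p_n)) / 2`.
The error term is nonpositive; since `p + log (1 - p) ≥ -p² / (1 - p)` and `K_n p_n ≤ c_n log n`,
it is `O((log n)² / n)` when `p* < 1`. The threshold `τ` is positive and continuous on `(-∞, 1)`
(at `0` because `log (1 - p) / p → -1`, the derivative of `log (1 - p)` at `0`), so the sign of
`1 - c / τ(p*)` decides the limit. When `p* = 1`, `1 / τ(p_n) → ∞` and the main term alone tends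
to `-∞`.
-/

open Filter Topology Real

lemma tendsto_log_one_sub_div_self_nhdsNE_zero :
    Tendsto (fun p : ℝ => log (1 - p) / p) (𝓝[≠] 0) (𝓝 (-1)) := by
  have h : HasDerivAt (fun p : ℝ => log (1 - p)) (-1) 0 := by
    simpa using ((hasDerivAt_id (0 : ℝ)).const_sub 1).log (by norm_num)
  simpa [div_eq_inv_mul] using h.tendsto_slope_zero

lemma log_one_sub_div_self_neg {p : ℝ} (h0 : p ≠ 0) (h1 : p < 1) : log (1 - p) / p < 0 := by
  rcases h0.lt_or_gt with hp | hp
  · exact div_neg_of_pos_of_neg (log_pos (by linarith)) hp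
  · exact div_neg_of_neg_of_pos (log_neg (by linarith) (by linarith)) hp

lemma tau_eq_two_div {p : ℝ} (h0 : p ≠ 0) (h1 : p ≠ 1) : tau p = 2 / (1 - log (1 - p) / p) := by
  simp [tau, h0, h1]

lemma tau_pos {p : ℝ} (hp : p < 1) : 0 < tau p := by
  by_cases h0 : p = 0
  · simp [tau, h0]
  · rw [tau_eq_two_div h0 hp.ne]
    exact div_pos two_pos (by linarith [log_one_sub_div_self_neg h0 hp])

lemma continuousAt_tau {q : ℝ} (hq : q < 1) : ContinuousAt tau q := by
  by_cases h0 : q = 0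
  · subst h0
    rw [← continuousWithinAt_compl_self, ContinuousWithinAt]
    have heq : (fun p : ℝ => 2 / (1 - log (1 - p) / p)) =ᶠ[𝓝[≠] 0] tau := by
      filter_upwards [self_mem_nhdsWithin, nhdsWithin_le_nhds (eventually_lt_nhds one_pos)]
        with p hp0 hp1 using (tau_eq_two_div hp0 hp1.ne).symm
    have hlim := (tendsto_const_nhds (x := (2 : ℝ))).div
      (tendsto_const_nhds.sub tendsto_log_one_sub_div_self_nhdsNE_zero)
      (by norm_num : (1 : ℝ) - -1 ≠ 0)
    convert hlim.congr' heq using 2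
    norm_num [tau]
  · have heq : (fun p : ℝ => 2 / (1 - log (1 - p) / p)) =ᶠ[𝓝 q] tau := by
      filter_upwards [isOpen_ne.mem_nhds h0, eventually_lt_nhds hq]
        with p hp0 hp1 using (tau_eq_two_div hp0 hp1.ne).symm
    refine ContinuousAt.congr ?_ heq
    refine continuousAt_const.div (continuousAt_const.sub
      (((continuousAt_const.sub continuousAt_id).log ?_).div continuousAt_id h0)) ?_
    · simpa [sub_eq_zero] using hq.ne'
    · linarith [log_one_sub_div_self_neg h0 hq]

lemma tendsto_inv_tau_nhdsLT_one : Tendsto (fun p => (tau p)⁻¹) (𝓝[<] 1) atTop := by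
  have h1p : Tendsto (fun p : ℝ => 1 - p) (𝓝[<] 1) (𝓝[>] 0) := by
    refine tendsto_nhdsWithin_iff.mpr
      ⟨?_, eventually_nhdsWithin_of_forall fun p hp => sub_pos.mpr (Set.mem_Iio.mp hp)⟩
    simpa using ((continuous_sub_left (1 : ℝ)).tendsto 1).mono_left nhdsWithin_le_nhds
  have hlog : Tendsto (fun p : ℝ => -log (1 - p) / 2) (𝓝[<] 1) atTop :=
    (tendsto_neg_atBot_atTop.comp (tendsto_log_nhdsGT_zero.comp h1p)).atTop_div_const two_pos
  refine tendsto_atTop_mono' _ ?_ hlog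
  filter_upwards [Ioo_mem_nhdsLT (zero_lt_one' ℝ)] with p ⟨hp0, hp1⟩
  have hl : log (1 - p) ≤ 0 := log_nonpos (by linarith) (by linarith)
  have hdiv : log (1 - p) / p ≤ log (1 - p) := by
    rw [div_le_iff₀ hp0]; nlinarith
  rw [tau_eq_two_div hp0.ne' hp1.ne, inv_div]
  linarith

lemma tendsto_one_sub_div_tau_atBot {ι : Type*} {l : Filter ι} {c p : ι → ℝ} {C : ℝ}
    (hC : 0 < C) (hc : Tendsto c l (𝓝 C)) (hp : Tendsto p l (𝓝[<] 1)) :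
    Tendsto (fun i => 1 - c i / tau (p i)) l atBot := by
  simpa [sub_eq_add_neg, div_eq_mul_inv] using tendsto_atBot_add_const_left l 1
    (tendsto_neg_atTop_atBot.comp (hc.pos_mul_atTop hC (tendsto_inv_tau_nhdsLT_one.comp hp)))

noncomputable def alphaErr (k n p : ℝ) : ℝ := k ^ 2 / (n - 1) * (p + log (1 - p)) / 2

section AlphaErr

variable {k n p c : ℝ}

lemma alpha_eq_log_mul_add_alphaErr (hp0 : p ≠ 0) (hp1 : p ≠ 1)
    (hscale : p * (2 * k - k ^ 2 / (n - 1)) = c * log n) :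
    (1 - c) * log n + k * (p + log (1 - p)) = log n * (1 - c / tau p) + alphaErr k n p := by
  rw [alphaErr, tau_eq_two_div hp0 hp1, div_div_eq_mul_div]
  set ℓ := log (1 - p) / p
  rw [show log (1 - p) = p * ℓ from (mul_div_cancel₀ _ hp0).symm]
  linear_combination (1 + ℓ) / 2 * hscale

lemma alphaErr_nonpos (hn : 1 ≤ n) (hp : p < 1) : alphaErr k n p ≤ 0 := by
  have : log (1 - p) ≤ -p := by linarith [log_le_sub_one_of_pos (sub_pos.mpr hp)]
  have : 0 ≤ k ^ 2 / (n - 1) := div_nonneg (sq_nonneg k) (by linarith)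
  rw [alphaErr]
  nlinarith

lemma neg_div_le_alphaErr (hk : 0 < k) (hkn : k ≤ n - 1) (hp0 : 0 < p) (hp1 : p < 1)
    (hscale : p * (2 * k - k ^ 2 / (n - 1)) = c * log n) :
    -((c * log n) ^ 2 / (2 * (n - 1) * (1 - p))) ≤ alphaErr k n p := by
  have hm : 0 < n - 1 := hk.trans_le hkn
  have hq : 0 < 1 - p := sub_pos.mpr hp1
  have hkp : k * p ≤ c * log n := by
    have : k ^ 2 / (n - 1) ≤ k := by rw [div_le_iff₀ hm]; nlinarith
    nlinarith
  have hlog : -(p ^ 2 / (1 - p)) ≤ p + log (1 - p) := by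
    have := one_sub_inv_le_log_of_pos hq
    have h : 1 - (1 - p)⁻¹ = -(p ^ 2 / (1 - p)) - p := by field_simp; ring
    linarith
  calc -((c * log n) ^ 2 / (2 * (n - 1) * (1 - p)))
      ≤ -((k * p) ^ 2 / (2 * (n - 1) * (1 - p))) := by gcongr
    _ = k ^ 2 / (n - 1) * -(p ^ 2 / (1 - p)) / 2 := by field_simp [hm.ne', hq.ne']
    _ ≤ alphaErr k n p := by rw [alphaErr]; gcongr

end AlphaErr

lemma tendsto_alphaErr_zero {k p c : ℕ → ℝ} {C q : ℝ}
    (hk : ∀ᶠ n : ℕ in atTop, 0 < k n ∧ k n ≤ n - 1) (hp : ∀ n, p n ∈ Set.Ioo (0 : ℝ) 1)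
    (hscale : ∀ᶠ n : ℕ in atTop, p n * (2 * k n - k n ^ 2 / (n - 1)) = c n * log n)
    (hc : Tendsto c atTop (𝓝 C)) (hq : q < 1) (hpq : Tendsto p atTop (𝓝 q)) :
    Tendsto (fun n : ℕ => alphaErr (k n) n (p n)) atTop (𝓝 0) := by
  have hlog : Tendsto (fun n : ℕ => log n ^ 2 / (1 * n + -1)) atTop (𝓝 0) :=
    (tendsto_pow_log_div_mul_add_atTop 1 (-1) 2 one_ne_zero).comp tendsto_natCast_atTop_atTop
  have hlower : Tendsto (fun n : ℕ => -((c n * log n) ^ 2 / (2 * (n - 1) * (1 - p n))))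
      atTop (𝓝 0) := by
    have h := (((hc.pow 2).mul hlog).div ((tendsto_const_nhds.sub hpq).const_mul 2)
      (by linarith : 2 * (1 - q) ≠ 0)).neg
    simp only [mul_zero, zero_div, neg_zero] at h
    refine h.congr fun n => ?_
    simp only [Pi.div_apply, div_eq_mul_inv, mul_inv, one_mul, ← sub_eq_add_neg]
    ring
  refine tendsto_of_tendsto_of_tendsto_of_le_of_le' hlower tendsto_const_nhds ?_ ?_
  · filter_upwards [hk, hscale] with n ⟨hk0, hkn⟩ hs
    exact neg_div_le_alphaErr hk0 hkn (hp n).1 (hp n).2 hs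
  · filter_upwards [hk] with n ⟨hk0, hkn⟩
    exact alphaErr_nonpos (by linarith) (hp n).2

theorem alpha_n_limits (K : ℕ → ℕ) (p c : ℕ → ℝ) (cc pstar : ℝ) (hcc : 0 < cc)
    (hK : ∀ n, 2 ≤ n → 1 ≤ K n ∧ K n < n)
    (hp : ∀ n, p n ∈ Set.Ioo (0:ℝ) 1)
    (hscale : ∀ n, 2 ≤ n →
      p n * (2 * (K n : ℝ) - (K n : ℝ) ^ 2 / ((n : ℝ) - 1)) = c n * Real.log n)
    (hc : Filter.Tendsto c Filter.atTop (nhds cc))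
    (hps : pstar ∈ Set.Icc (0:ℝ) 1)
    (hplim : Filter.Tendsto p Filter.atTop (nhds pstar)) :
    (cc > tau pstar →
      Filter.Tendsto
        (fun n : ℕ => (1 - c n) * Real.log n + (K n : ℝ) * (p n + Real.log (1 - p n)))
        Filter.atTop Filter.atBot)
    ∧ (cc < tau pstar →
      Filter.Tendsto
        (fun n : ℕ => (1 - c n) * Real.log n + (K n : ℝ) * (p n + Real.log (1 - p n)))
        Filter.atTop Filter.atTop) := by
  have hK' : ∀ᶠ n : ℕ in atTop, 0 < (K n : ℝ) ∧ (K n : ℝ) ≤ n - 1 := by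
    filter_upwards [eventually_ge_atTop 2] with n hn
    obtain ⟨hK1, hKn⟩ := hK n hn
    exact ⟨by exact_mod_cast hK1, le_sub_iff_add_le.mpr (by exact_mod_cast hKn)⟩
  have hscale' := (eventually_ge_atTop 2).mono hscale
  have hα : ∀ᶠ n : ℕ in atTop, log n * (1 - c n / tau (p n)) + alphaErr (K n) n (p n) =
      (1 - c n) * log n + K n * (p n + log (1 - p n)) := by
    filter_upwards [hscale'] with n hs
    exact (alpha_eq_log_mul_add_alphaErr (hp n).1.ne' (hp n).2.ne hs).symm
  have hlog : Tendsto (fun n : ℕ => log n) atTop atTop :=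
    tendsto_log_atTop.comp tendsto_natCast_atTop_atTop
  rcases hps.2.lt_or_eq with hp1 | rfl
  · have hτ := tau_pos hp1
    have hmain : Tendsto (fun n => 1 - c n / tau (p n)) atTop (𝓝 (1 - cc / tau pstar)) :=
      (hc.div ((continuousAt_tau hp1).tendsto.comp hplim) hτ.ne').const_sub 1
    have herr := tendsto_alphaErr_zero hK' hp hscale' hc hp1 hplim
    refine ⟨fun h => ?_, fun h => ?_⟩
    · have hneg : 1 - cc / tau pstar < 0 := by rwa [sub_neg, one_lt_div hτ]
      exact ((hlog.atTop_mul_neg hneg hmain).atBot_add herr).congr' hα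
    · have hpos : 0 < 1 - cc / tau pstar := by rwa [sub_pos, div_lt_one hτ]
      exact ((hlog.atTop_mul_pos hpos hmain).atTop_add herr).congr' hα
  · refine ⟨fun _ => ?_, fun h => absurd h (by simp [tau, hcc.le])⟩
    have hp1 : Tendsto p atTop (𝓝[<] 1) :=
      tendsto_nhdsWithin_iff.mpr ⟨hplim, Eventually.of_forall fun n => (hp n).2⟩
    refine tendsto_atBot_mono' _ ?_
      (hlog.atTop_mul_atBot₀ (tendsto_one_sub_div_tau_atBot hcc hc hp1))
    filter_upwards [hα, hK'] with n hn ⟨_, hkn⟩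
    rw [← hn]
    exact add_le_of_nonpos_right (alphaErr_nonpos (by linarith) (hp n).2)
end

section
/- Fix n ≥ 2, 2 ≤ r ≤ n, 1 ≤ K < n, p ∈ (0,1). For any spanning tree T on vertex set {1,...,r}, the probability that every edge of T is present in H∩G(n;K,p) is at most (p·λ_n(K))^{r−1}, where λ_n(K) = 2K/(n−1) − (K/(n−1))². -/
open scoped Classical

/-- The set of admissible pairing assignments: each node `i` is assigned a
`K`-element subset of the other nodes. -/
noncomputable def validGammas (n K : ℕ) : Finset (Fin n → Finset (Fin n)) :=
  Finset.univ.filter (fun γ => ∀ i, γ i ∈ Finset.powersetCard K (Finset.univ.erase i))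

/-- Probability of an event in `H ∩ G(n; K, p)`: the pairing assignment `γ` is
uniform over `validGammas n K`, and the channel states `β` are i.i.d.
Bernoulli(p) over (unordered) pairs, independent of `γ`. -/
noncomputable def probHG (n K : ℕ) (p : ℝ)
    (E : (Fin n → Finset (Fin n)) → (Sym2 (Fin n) → Bool) → Prop) : ℝ :=
  (∑ γ ∈ validGammas n K, ∑ β : Sym2 (Fin n) → Bool,
      (∏ e : Sym2 (Fin n), if β e then p else 1 - p) * (if E γ β then 1 else 0))
    / ((validGammas n K).card : ℝ)

/-- Adjacency in `H ∩ G(n; K, p)`: K-adjacency and an available channel. -/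
def adjHG (n : ℕ) (γ : Fin n → Finset (Fin n)) (β : Sym2 (Fin n) → Bool)
    (i j : Fin n) : Prop :=
  (j ∈ γ i ∨ i ∈ γ j) ∧ β s(i, j) = true

/-!
Root `T` and keep only the `r - 1` edges joining each vertex to a neighbour closer to the root;
this can only enlarge the event. The channels are independent of the pairings and contribute
`p ^ (r - 1)`. For the pairings, add the edges in order of depth, so that each new child `v` of
`u` is a fresh leaf: the event `E` built so far does not look at `Γ_v`, and it survives replacing
`v` in `Γ_u` by any other node. Double counting `K`-subsets then gives
`P(v ∈ Γ_u | E) ≤ K/(n-1)`, while `P(u ∈ Γ_v | E, v ∉ Γ_u) = K/(n-1)` by independence, so each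
edge costs a factor `1 - (1 - K/(n-1))^2 = λ_n(K)`.
-/

open Finset Function

namespace Finset

variable {α : Type*} [DecidableEq α]

theorem exists_eq_insert_erase_of_erase_subset {s t : Finset α} {v : α} (hvs : v ∈ s)
    (hcard : #s = #t) (hst : s.erase v ⊆ t) : ∃ y ∈ t, s = insert v (t.erase y) := by
  have hlt : #(s.erase v) < #t := by
    rw [card_erase_of_mem hvs, ← hcard]
    exact Nat.sub_lt (card_pos.2 ⟨v, hvs⟩) one_pos
  obtain ⟨y, hyt, hys⟩ := exists_mem_notMem_of_card_lt_card hlt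
  have hsub : s.erase v ⊆ t.erase y := fun z hz =>
    mem_erase.2 ⟨fun hzy => hys (hzy ▸ hz), hst hz⟩
  have heq : s.erase v = t.erase y := eq_of_subset_of_card_le hsub <| by
    rw [card_erase_of_mem hyt, card_erase_of_mem hvs, hcard]
  exact ⟨y, hyt, by rw [← heq, insert_erase hvs]⟩

theorem insert_erase_mem_powersetCard {K : ℕ} {X s : Finset α} {v x : α}
    (hs : s ∈ powersetCard K X) (hvs : v ∈ s) (hxX : x ∈ X) (hxs : x ∉ s) :
    insert x (s.erase v) ∈ powersetCard K X := by
  rw [mem_powersetCard] at hs ⊢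
  refine ⟨insert_subset hxX ((erase_subset v s).trans hs.1), ?_⟩
  rw [card_insert_of_notMem fun h => hxs (mem_of_mem_erase h), card_erase_of_mem hvs, hs.2]
  have := card_pos.2 ⟨v, hvs⟩
  omega

/-- Double count the pairs `(s, t)` of members with `v ∈ s`, `v ∉ t` and `s.erase v ⊆ t`. -/
theorem card_mul_card_filter_mem_le_of_swap (K : ℕ) (X : Finset α) (v : α)
    (B : Finset α → Prop) [DecidablePred B]
    (hB : ∀ s, B s → ∀ x ∈ X, B (insert x (s.erase v))) :
    #X * #{s ∈ powersetCard K X | B s ∧ v ∈ s} ≤ K * #{s ∈ powersetCard K X | B s} := by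
  obtain hKX | hXK := le_or_gt K #X
  swap
  · simp [powersetCard_eq_empty.2 hXK]
  set 𝒜 := {s ∈ powersetCard K X | B s}
  have hcount : #{s ∈ 𝒜 | v ∈ s} * (#X - K) ≤ #{s ∈ 𝒜 | v ∉ s} * K := by
    refine card_mul_le_card_mul (fun s t => s.erase v ⊆ t) (fun s hs => ?_) (fun t ht => ?_)
    · simp only [𝒜, mem_filter, mem_powersetCard] at hs
      obtain ⟨⟨⟨hsX, hsK⟩, hBs⟩, hvs⟩ := hs
      rw [← hsK, ← card_sdiff_of_subset hsX]
      refine card_le_card_of_injOn (fun x => insert x (s.erase v)) (fun x hx => ?_)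
        (fun x hx y hy hxy => ?_)
      · simp only [coe_sdiff, Set.mem_sdiff, mem_coe] at hx
        simp only [mem_coe, 𝒜, mem_bipartiteAbove, mem_filter]
        refine ⟨⟨⟨insert_erase_mem_powersetCard (mem_powersetCard.2 ⟨hsX, hsK⟩) hvs hx.1 hx.2,
          hB s hBs x hx.1⟩, ?_⟩, subset_insert _ _⟩
        simp only [mem_insert, mem_erase, ne_eq, not_true_eq_false, false_and, or_false]
        rintro rfl
        exact hx.2 hvs
      · simp only [coe_sdiff, Set.mem_sdiff, mem_coe] at hx hy
        exact (insert_inj fun h => hx.2 (mem_of_mem_erase h)).1 hxy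
    · simp only [𝒜, mem_filter, mem_powersetCard] at ht
      obtain ⟨⟨⟨-, htK⟩, -⟩, -⟩ := ht
      calc #(bipartiteBelow _ _ t) ≤ #(t.image fun y => insert v (t.erase y)) := by
            refine card_le_card fun s hs => ?_
            simp only [𝒜, mem_bipartiteBelow, mem_filter, mem_powersetCard] at hs
            obtain ⟨⟨⟨⟨-, hsK⟩, -⟩, hvs⟩, hst⟩ := hs
            obtain ⟨y, hyt, rfl⟩ :=
              exists_eq_insert_erase_of_erase_subset hvs (hsK.trans htK.symm) hst
            exact mem_image_of_mem _ hyt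
        _ ≤ K := card_image_le.trans htK.le
  have hsplit := card_filter_add_card_filter_not (s := 𝒜) (fun s => v ∈ s)
  rw [← filter_filter]
  zify [hKX] at hcount hsplit ⊢
  linear_combination hcount + (K : ℤ) * hsplit

variable {ι σ : Type*} [Fintype ι] [DecidableEq ι]

theorem sum_sum_update_eq_card_smul_sum {M : Type*} [AddCommMonoid M]
    (P : ι → Finset σ) (u : ι) (F : (ι → σ) → M) :
    ∑ γ ∈ Fintype.piFinset P, ∑ s ∈ P u, F (update γ u s)
      = #(P u) • ∑ γ ∈ Fintype.piFinset P, F γ := by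
  have hmem : ∀ x ∈ Fintype.piFinset P ×ˢ P u,
      (update x.1 u x.2, x.1 u) ∈ Fintype.piFinset P ×ˢ P u := by
    simp only [mem_product, Fintype.mem_piFinset]
    rintro ⟨γ, s⟩ ⟨hγ, hs⟩
    refine ⟨fun i => ?_, hγ u⟩
    rcases eq_or_ne i u with rfl | hi
    · simpa using hs
    · simpa [hi] using hγ i
  conv_rhs => rw [← sum_const, sum_comm]
  rw [← sum_product', ← sum_product']
  exact sum_nbij' (fun x => (update x.1 u x.2, x.1 u)) (fun x => (update x.1 u x.2, x.1 u))
    hmem hmem (by simp) (by simp) (by simp)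

theorem card_mul_card_filter_mem_apply_le_of_swap (X : ι → Finset α) (K : ℕ)
    (E : (ι → Finset α) → Prop) [DecidablePred E] (u : ι) (v : α)
    (hE : ∀ γ, E γ → ∀ x ∈ X u, E (update γ u (insert x ((γ u).erase v)))) :
    #(X u) * #{γ ∈ Fintype.piFinset (fun i => powersetCard K (X i)) | E γ ∧ v ∈ γ u}
      ≤ K * #{γ ∈ Fintype.piFinset (fun i => powersetCard K (X i)) | E γ} := by
  set P := fun i => powersetCard K (X i)
  have hfiber : ∀ (G : (ι → Finset α) → Prop) [DecidablePred G],
      #(P u) * #{γ ∈ Fintype.piFinset P | G γ}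
        = ∑ γ ∈ Fintype.piFinset P, #{s ∈ P u | G (update γ u s)} := by
    intro G _
    simp only [card_filter, ← smul_eq_mul, ← sum_sum_update_eq_card_smul_sum]
  have hswap : ∀ γ, #(X u) * #{s ∈ P u | E (update γ u s) ∧ v ∈ s}
      ≤ K * #{s ∈ P u | E (update γ u s)} := fun γ =>
    card_mul_card_filter_mem_le_of_swap K (X u) v _ fun s hs x hx => by
      simpa using hE _ hs x hx
  obtain hPu | hPu := (P u).eq_empty_or_nonempty
  · simp [Fintype.piFinset_eq_empty.2 ⟨u, hPu⟩]
  refine Nat.le_of_mul_le_mul_left (c := #(P u)) ?_ hPu.card_pos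
  calc #(P u) * (#(X u) * #{γ ∈ Fintype.piFinset P | E γ ∧ v ∈ γ u})
      = #(X u) * ∑ γ ∈ Fintype.piFinset P, #{s ∈ P u | E (update γ u s) ∧ v ∈ s} := by
        rw [mul_left_comm, hfiber]; simp
    _ ≤ K * ∑ γ ∈ Fintype.piFinset P, #{s ∈ P u | E (update γ u s)} := by
        simp only [mul_sum]; exact sum_le_sum fun γ _ => hswap γ
    _ = #(P u) * (K * #{γ ∈ Fintype.piFinset P | E γ}) := by rw [mul_left_comm, hfiber]

end Finset

/-- The paper's `λ_n(K) = 1 - (1 - K/(n-1))^2`, the probability that two given nodes are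
`K`-adjacent. -/
noncomputable def kAdjProb (n K : ℕ) : ℝ :=
  2 * (K : ℝ) / ((n : ℝ) - 1) - ((K : ℝ) / ((n : ℝ) - 1)) ^ 2

theorem kAdjProb_nonneg {n K : ℕ} (hK : K < n) : 0 ≤ kAdjProb n K := by
  have hKn : (K : ℝ) + 1 ≤ n := by exact_mod_cast hK
  have hq0 : 0 ≤ (K : ℝ) / ((n : ℝ) - 1) := div_nonneg K.cast_nonneg (by linarith)
  have hq1 : (K : ℝ) / ((n : ℝ) - 1) ≤ 1 := div_le_one_of_le₀ (by linarith) (by linarith)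
  have : kAdjProb n K = (K : ℝ) / ((n : ℝ) - 1) * (2 - (K : ℝ) / ((n : ℝ) - 1)) := by
    unfold kAdjProb; ring
  rw [this]
  exact mul_nonneg hq0 (by linarith)

theorem add_le_kAdjProb_mul {n K : ℕ} (hn : 1 < n) (hK : K < n) {a₁ a₂ b : ℝ}
    (h₁ : (n - 1 : ℝ) * a₁ ≤ K * (a₁ + b)) (h₂ : (n - 1 : ℝ) * a₂ ≤ K * b) :
    a₁ + a₂ ≤ kAdjProb n K * (a₁ + b) := by
  set m : ℝ := n - 1
  have hm : 0 < m := by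
    simp only [m, sub_pos]
    exact_mod_cast hn
  have hKm : (K : ℝ) ≤ m := by
    have : (K : ℝ) + 1 ≤ n := by exact_mod_cast hK
    linarith
  have hlam : kAdjProb n K = (2 * K * m - K ^ 2) / m ^ 2 := by
    simp only [kAdjProb, m] at hm ⊢
    field_simp
  rw [hlam, div_mul_eq_mul_div, le_div_iff₀ (by positivity)]
  nlinarith [mul_le_mul_of_nonneg_left h₂ hm.le, mul_le_mul_of_nonneg_left h₁ (sub_nonneg.2 hKm)]

section KAdjacency

variable {V : Type*} [DecidableEq V]

/-- `γ i` plays the role of `Γ_i`. -/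
def KAdj (γ : V → Finset V) (a b : V) : Prop := b ∈ γ a ∨ a ∈ γ b

instance (γ : V → Finset V) (a b : V) : Decidable (KAdj γ a b) :=
  inferInstanceAs (Decidable (_ ∨ _))

theorem kAdj_update_iff_of_ne {γ : V → Finset V} {a b i : V} (ha : a ≠ i) (hb : b ≠ i)
    (t : Finset V) : KAdj (update γ i t) a b ↔ KAdj γ a b := by
  simp only [KAdj, update_of_ne ha, update_of_ne hb]

theorem KAdj.mono_of_erase_subset {γ γ' : V → Finset V} {a b v : V}
    (hγ : ∀ i, (γ i).erase v ⊆ γ' i) (ha : a ≠ v) (hb : b ≠ v) (h : KAdj γ a b) :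
    KAdj γ' a b :=
  h.imp (fun h => hγ a (mem_erase.2 ⟨hb, h⟩)) (fun h => hγ b (mem_erase.2 ⟨ha, h⟩))

theorem erase_subset_update_insert_erase (γ : V → Finset V) (u v x i : V) :
    (γ i).erase v ⊆ update γ u (insert x ((γ u).erase v)) i := by
  rcases eq_or_ne i u with rfl | hi
  · simp
  · simpa [hi] using erase_subset _ _

variable [Fintype V]

variable (V) in
def pairingAssignments (K : ℕ) : Finset (V → Finset V) :=
  Fintype.piFinset fun i => powersetCard K (univ.erase i)

theorem cast_card_univ_erase (u : V) : ((#(univ.erase u) : ℕ) : ℝ) = Fintype.card V - 1 := by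
  rw [card_erase_of_mem (mem_univ u), card_univ, Nat.cast_pred (Fintype.card_pos_iff.2 ⟨u⟩)]

theorem card_filter_and_kAdj_le {K : ℕ} (hK : K < Fintype.card V)
    (E : (V → Finset V) → Prop) [DecidablePred E] {u v : V} (huv : u ≠ v)
    (hEv : ∀ γ t, E γ → E (update γ v t))
    (hEu : ∀ γ x, E γ → E (update γ u (insert x ((γ u).erase v)))) :
    (#{γ ∈ pairingAssignments V K | E γ ∧ KAdj γ u v} : ℝ)
      ≤ kAdjProb (Fintype.card V) K * #{γ ∈ pairingAssignments V K | E γ} := by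
  set Γ := pairingAssignments V K
  -- `v ∈ Γ_u` is negatively correlated with `E`
  have h₁ : (Fintype.card V - 1 : ℝ) * #{γ ∈ Γ | E γ ∧ v ∈ γ u} ≤ K * #{γ ∈ Γ | E γ} := by
    rw [← cast_card_univ_erase u]
    exact_mod_cast card_mul_card_filter_mem_apply_le_of_swap (fun i => univ.erase i) K E u v
      fun γ hγ x _ => hEu γ x hγ
  -- `u ∈ Γ_v` is independent of `E ∧ v ∉ Γ_u`
  have h₂ : (Fintype.card V - 1 : ℝ) * #{γ ∈ Γ | (E γ ∧ v ∉ γ u) ∧ u ∈ γ v}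
      ≤ K * #{γ ∈ Γ | E γ ∧ v ∉ γ u} := by
    rw [← cast_card_univ_erase v]
    exact_mod_cast card_mul_card_filter_mem_apply_le_of_swap (fun i => univ.erase i) K
      (fun γ => E γ ∧ v ∉ γ u) v u
      fun γ hγ x _ => ⟨hEv γ _ hγ.1, by simpa [update_of_ne huv] using hγ.2⟩
  have hadj : #{γ ∈ Γ | E γ ∧ KAdj γ u v}
      = #{γ ∈ Γ | E γ ∧ v ∈ γ u} + #{γ ∈ Γ | (E γ ∧ v ∉ γ u) ∧ u ∈ γ v} := by
    rw [← card_union_of_disjoint (disjoint_filter.2 fun γ _ h₁ h₂ => h₂.1.2 h₁.2)]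
    congr 1
    ext γ
    simp only [mem_filter, mem_union]
    unfold KAdj
    tauto
  have hE : #{γ ∈ Γ | E γ ∧ v ∈ γ u} + #{γ ∈ Γ | E γ ∧ v ∉ γ u} = #{γ ∈ Γ | E γ} := by
    rw [← filter_filter, ← filter_filter, card_filter_add_card_filter_not]
  rw [← hE] at h₁
  rw [hadj, ← hE]
  push_cast at h₁ ⊢
  exact add_le_kAdjProb_mul (Fintype.one_lt_card_iff.2 ⟨u, v, huv⟩) hK h₁ h₂

/-- `pa` is a parent map and `d` a depth decreasing towards the root: adding the edges
`c (pa w) — c w` deepest-last, each new child is a fresh leaf. -/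
theorem card_filter_forall_kAdj_le {ι : Type*} [DecidableEq ι] {K : ℕ}
    (hK : K < Fintype.card V) {c : ι → V} (hc : Injective c) {pa : ι → ι} {d : ι → ℕ}
    (s : Finset ι) (hd : ∀ w ∈ s, d (pa w) < d w) :
    (#{γ ∈ pairingAssignments V K | ∀ w ∈ s, KAdj γ (c (pa w)) (c w)} : ℝ)
      ≤ kAdjProb (Fintype.card V) K ^ #s * #(pairingAssignments V K) := by
  induction s using Finset.induction_on_max_value d with
  | empty => simp
  | insert a s has hmax ih =>
    simp only [forall_mem_insert] at hd
    have hfresh : ∀ w ∈ s, c (pa w) ≠ c a ∧ c w ≠ c a := fun w hw =>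
      ⟨hc.ne (ne_of_apply_ne d ((hd.2 w hw).trans_le (hmax w hw)).ne),
        hc.ne (ne_of_mem_of_not_mem hw has)⟩
    calc (#{γ ∈ pairingAssignments V K | ∀ w ∈ insert a s, KAdj γ (c (pa w)) (c w)} : ℝ)
        = #{γ ∈ pairingAssignments V K |
            (∀ w ∈ s, KAdj γ (c (pa w)) (c w)) ∧ KAdj γ (c (pa a)) (c a)} := by
          simp only [forall_mem_insert, and_comm]
      _ ≤ kAdjProb (Fintype.card V) K *
            #{γ ∈ pairingAssignments V K | ∀ w ∈ s, KAdj γ (c (pa w)) (c w)} :=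
          card_filter_and_kAdj_le hK _ (hc.ne (ne_of_apply_ne d hd.1.ne))
            (fun γ t hγ w hw =>
              (kAdj_update_iff_of_ne (hfresh w hw).1 (hfresh w hw).2 t).2 (hγ w hw))
            (fun γ x hγ w hw => (hγ w hw).mono_of_erase_subset
              (erase_subset_update_insert_erase γ _ _ x) (hfresh w hw).1 (hfresh w hw).2)
      _ ≤ kAdjProb (Fintype.card V) K ^ #(insert a s) * #(pairingAssignments V K) := by
          rw [card_insert_of_notMem has, pow_succ', mul_assoc]
          exact mul_le_mul_of_nonneg_left (ih hd.2) (kAdjProb_nonneg hK)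

end KAdjacency

theorem validGammas_eq_pairingAssignments (n K : ℕ) :
    validGammas n K = pairingAssignments (Fin n) K := by
  ext γ
  simp [validGammas, pairingAssignments]

theorem card_filter_validGammas_forall_kAdj_div_le {ι : Type*} [DecidableEq ι] {n K : ℕ}
    (hK : K < n) {c : ι → Fin n} (hc : Injective c) {pa : ι → ι} {d : ι → ℕ}
    (s : Finset ι) (hd : ∀ w ∈ s, d (pa w) < d w)
    -- an instance binder, so that it unifies with `Fintype`-based decidability of `∀ w ∈ s`
    [DecidablePred fun γ : Fin n → Finset (Fin n) => ∀ w ∈ s, KAdj γ (c (pa w)) (c w)] :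
    (#{γ ∈ validGammas n K | ∀ w ∈ s, KAdj γ (c (pa w)) (c w)} : ℝ) / #(validGammas n K)
      ≤ kAdjProb n K ^ #s := by
  have hΓ : (0 : ℝ) < #(validGammas n K) := by
    rw [validGammas_eq_pairingAssignments]
    exact_mod_cast (Fintype.piFinset_nonempty.2 fun i =>
      powersetCard_nonempty.2 (by
        rw [card_erase_of_mem (mem_univ i), card_univ, Fintype.card_fin]; omega)).card_pos
  have h := card_filter_forall_kAdj_le (K := K) (by rwa [Fintype.card_fin]) hc s hd
  rw [Fintype.card_fin, filter_congr_decidable, ← validGammas_eq_pairingAssignments] at h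
  exact (div_le_iff₀ hΓ).2 h

theorem sum_prod_bernoulli_mul_indicator_forall_mem {E : Type*} [Fintype E] [DecidableEq E]
    (p : ℝ) (S : Finset E) :
    ∑ β : E → Bool, (∏ e, if β e then p else 1 - p) * (if ∀ e ∈ S, β e = true then 1 else 0)
      = p ^ #S := by
  have hind : ∀ β : E → Bool, (if ∀ e ∈ S, β e = true then (1 : ℝ) else 0)
      = ∏ e, if e ∈ S → β e = true then 1 else 0 := fun β => by
    rw [prod_boole]; simp
  simp only [hind, ← prod_mul_distrib]
  rw [← Fintype.prod_sum (fun e b => (if b then p else 1 - p) *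
    if e ∈ S → b = true then (1 : ℝ) else 0)]
  rw [← prod_const, ← prod_subset (subset_univ S) (fun e _ he => by simp [he])]
  exact prod_congr rfl fun e he => by simp [he]

theorem probHG_mono {n K : ℕ} {p : ℝ} (hp : p ∈ Set.Icc (0 : ℝ) 1)
    {E F : (Fin n → Finset (Fin n)) → (Sym2 (Fin n) → Bool) → Prop}
    (hEF : ∀ γ β, E γ β → F γ β) : probHG n K p E ≤ probHG n K p F := by
  unfold probHG
  gcongr with γ _ β _
  · exact prod_nonneg fun e _ => by split_ifs <;> linarith [hp.1, hp.2]
  · split_ifs <;> simp_all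

theorem probHG_and_forall_mem {n K : ℕ} (p : ℝ) (A : (Fin n → Finset (Fin n)) → Prop)
    [DecidablePred A] (S : Finset (Sym2 (Fin n))) :
    probHG n K p (fun γ β => A γ ∧ ∀ e ∈ S, β e = true)
      = #{γ ∈ validGammas n K | A γ} / #(validGammas n K) * p ^ #S := by
  rw [probHG, div_mul_eq_mul_div, card_filter, Nat.cast_sum, sum_mul]
  congr 1
  refine sum_congr rfl fun γ _ => ?_
  by_cases h : A γ
  · simpa [h] using sum_prod_bernoulli_mul_indicator_forall_mem p S
  · simp [h]

theorem SimpleGraph.Connected.exists_adj_dist_lt {V : Type*} {G : SimpleGraph V}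
    (hG : G.Connected) (u : V) {v : V} (hv : v ≠ u) :
    ∃ w, G.Adj w v ∧ G.dist u w < G.dist u v := by
  obtain ⟨q, hq⟩ := hG.exists_walk_length_eq_dist v u
  cases q with
  | nil => exact absurd rfl hv
  | cons h q =>
    refine ⟨_, h.symm, ?_⟩
    rw [SimpleGraph.dist_comm, SimpleGraph.dist_comm (u := u), ← hq, SimpleGraph.Walk.length_cons]
    exact Nat.lt_succ_of_le (SimpleGraph.dist_le q)

theorem card_image_sym2_mk_of_lt {ι V : Type*} [DecidableEq V] {c : ι → V} (hc : Injective c)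
    {pa : ι → ι} {d : ι → ℕ} {s : Finset ι} (hd : ∀ w ∈ s, d (pa w) < d w) :
    #(s.image fun w => s(c (pa w), c w)) = #s := by
  refine card_image_of_injOn fun w hw w' hw' h => ?_
  rcases Sym2.eq_iff.1 h with ⟨-, h⟩ | ⟨h₁, h₂⟩
  · exact hc h
  · obtain rfl := hc h₁
    have h := hd _ hw'
    rw [← hc h₂] at h
    exact absurd (hd w hw) h.not_gt

theorem tree_containment_prob_bound_general (n r K : ℕ) (p : ℝ) (hrn : r ≤ n) (hKn : K < n)
    (hp : p ∈ Set.Ioo (0:ℝ) 1)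
    (T : SimpleGraph (Fin r)) (hT : T.IsTree) :
    probHG n K p (fun γ β => ∀ i j : Fin r, T.Adj i j →
        adjHG n γ β (Fin.castLE hrn i) (Fin.castLE hrn j))
      ≤ (p * (2 * (K : ℝ) / ((n : ℝ) - 1) - ((K : ℝ) / ((n : ℝ) - 1)) ^ 2)) ^ (r - 1) := by
  obtain ⟨root⟩ := hT.connected.nonempty
  choose! pa hadj hdist using fun w (hw : w ≠ root) => hT.connected.exists_adj_dist_lt root hw
  set c := Fin.castLE hrn
  set s := univ.erase root
  have hd : ∀ w ∈ s, T.dist root (pa w) < T.dist root w := fun w hw =>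
    hdist w (ne_of_mem_erase hw)
  have hs : #s = r - 1 := by simp [s]
  calc probHG n K p _
      ≤ probHG n K p fun γ β => (∀ w ∈ s, KAdj γ (c (pa w)) (c w)) ∧
          ∀ e ∈ s.image (fun w => s(c (pa w), c w)), β e = true :=
        probHG_mono (Set.Ioo_subset_Icc_self hp) fun γ β h =>
          ⟨fun w hw => (h _ _ (hadj w (ne_of_mem_erase hw))).1,
            forall_mem_image.2 fun w hw => (h _ _ (hadj w (ne_of_mem_erase hw))).2⟩
    _ ≤ kAdjProb n K ^ #s * p ^ #s := by
        rw [probHG_and_forall_mem, card_image_sym2_mk_of_lt (Fin.castLE_injective hrn) hd]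
        exact mul_le_mul_of_nonneg_right
          (card_filter_validGammas_forall_kAdj_div_le hKn (Fin.castLE_injective hrn) s hd)
          (pow_nonneg hp.1.le _)
    _ = _ := by rw [← mul_pow, mul_comm, hs]; rfl

theorem tree_containment_prob_bound (n r K : ℕ) (p : ℝ) (hn : 2 ≤ n)
    (hr2 : 2 ≤ r) (hrn : r ≤ n) (hK1 : 1 ≤ K) (hKn : K < n)
    (hp : p ∈ Set.Ioo (0:ℝ) 1)
    (T : SimpleGraph (Fin r)) (hT : T.IsTree) :
    probHG n K p (fun γ β => ∀ i j : Fin r, T.Adj i j →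
        adjHG n γ β (Fin.castLE hrn i) (Fin.castLE hrn j))
      ≤ (p * (2 * (K : ℝ) / ((n : ℝ) - 1) - ((K : ℝ) / ((n : ℝ) - 1)) ^ 2)) ^ (r - 1) :=
  tree_containment_prob_bound_general n r K p hrn hKn hp T hT
end
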